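/- arXiv:1011.2584 — 3 statements merged into one kernel-verified Lean document; each statement's English description precedes it below -/
import Mathlib

section
/- Let θ₁, ..., θ₆ ∈ (0, π) and set a_j = e^{iθ_j}. Define q₀ = a₁a₄ + a₂a₅ + a₃a₆ + a₁a₂a₆ + a₁a₃a₅ + a₂a₃a₄ + a₄a₅a₆ + a₁a₂a₃a₄a₅a₆, q₁ = -(a₁-a₁⁻¹)(a₄-a₄⁻¹) - (a₂-a₂⁻¹)(a₅-a₅⁻¹) - (a₃-a₃⁻¹)(a₆-a₆⁻¹), q₂ = a₁⁻¹a₄⁻¹ + a₂⁻¹a₅⁻¹ + a₃⁻¹a₆⁻¹ + a₁⁻¹a₂⁻¹a₆⁻¹ + a₁⁻¹a₃⁻¹a₅⁻¹ + a₂⁻¹a₃⁻¹a₄⁻¹ + a₄⁻¹a₅⁻¹a₆⁻¹ + a₁⁻¹a₂⁻¹a₃⁻¹a₄⁻¹a₅⁻¹a₆⁻¹, and let G be the 4×4 symmetric matrix with diagonal entries 1 and off-diagonal entries G₁₂ = -cos θ₁, G₁₃ = -cos θ₂, G₁₄ = -cos θ₆, G₂₃ = -cos θ₃, G₂₄ =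 -cos θ₅, G₃₄ = -cos θ₄. Then q₁² - 4 q₀ q₂ = 16 det G. -/
/-!
Since `2 cos θ = a + a⁻¹` for `a = e^{iθ}`, the matrix `2G` has entries `2` and
`-(a_j + a_j⁻¹)`, and `16 det G = det (2G)`. The theorem is therefore the identity of Laurent
polynomials `q₁² - 4 q₀ q₂ = det (2G)` in nonzero `a₁, …, a₆`, which holds over any field.
-/

open scoped Real

theorem Matrix.det_symm_fin_four_of_const_diag {R : Type*} [CommRing R]
    (d x₁ x₂ x₃ x₄ x₅ x₆ : R) :
    Matrix.det !![d, x₁, x₂, x₆; x₁, d, x₃, x₅; x₂, x₃, d, x₄; x₆, x₅, x₄, d] =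
      d ^ 4 - d ^ 2 * (x₁ ^ 2 + x₂ ^ 2 + x₃ ^ 2 + x₄ ^ 2 + x₅ ^ 2 + x₆ ^ 2)
        + 2 * d * (x₁ * x₂ * x₃ + x₁ * x₅ * x₆ + x₂ * x₄ * x₆ + x₃ * x₄ * x₅)
        + x₁ ^ 2 * x₄ ^ 2 + x₂ ^ 2 * x₅ ^ 2 + x₃ ^ 2 * x₆ ^ 2
        - 2 * (x₁ * x₂ * x₄ * x₅ + x₂ * x₃ * x₅ * x₆ + x₁ * x₃ * x₄ * x₆) := by
  rw [Matrix.det_succ_row_zero]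
  simp [Fin.sum_univ_succ, Matrix.det_fin_three, Fin.succAbove]
  ring

theorem discriminant_eq_det_two_sub_sum_inv {K : Type*} [Field K] {a₁ a₂ a₃ a₄ a₅ a₆ : K}
    (h₁ : a₁ ≠ 0) (h₂ : a₂ ≠ 0) (h₃ : a₃ ≠ 0) (h₄ : a₄ ≠ 0) (h₅ : a₅ ≠ 0) (h₆ : a₆ ≠ 0) :
    (-(a₁ - a₁⁻¹)*(a₄ - a₄⁻¹) - (a₂ - a₂⁻¹)*(a₅ - a₅⁻¹) - (a₃ - a₃⁻¹)*(a₆ - a₆⁻¹)) ^ 2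
      - 4 * (a₁*a₄ + a₂*a₅ + a₃*a₆ + a₁*a₂*a₆ + a₁*a₃*a₅ + a₂*a₃*a₄ + a₄*a₅*a₆
        + a₁*a₂*a₃*a₄*a₅*a₆)
      * (a₁⁻¹*a₄⁻¹ + a₂⁻¹*a₅⁻¹ + a₃⁻¹*a₆⁻¹ + a₁⁻¹*a₂⁻¹*a₆⁻¹ + a₁⁻¹*a₃⁻¹*a₅⁻¹
        + a₂⁻¹*a₃⁻¹*a₄⁻¹ + a₄⁻¹*a₅⁻¹*a₆⁻¹ + a₁⁻¹*a₂⁻¹*a₃⁻¹*a₄⁻¹*a₅⁻¹*a₆⁻¹) =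
    Matrix.det !![2, -(a₁ + a₁⁻¹), -(a₂ + a₂⁻¹), -(a₆ + a₆⁻¹);
                  -(a₁ + a₁⁻¹), 2, -(a₃ + a₃⁻¹), -(a₅ + a₅⁻¹);
                  -(a₂ + a₂⁻¹), -(a₃ + a₃⁻¹), 2, -(a₄ + a₄⁻¹);
                  -(a₆ + a₆⁻¹), -(a₅ + a₅⁻¹), -(a₄ + a₄⁻¹), 2] := by
  rw [Matrix.det_symm_fin_four_of_const_diag]
  field_simp
  ring

theorem Complex.cos_eq_exp_add_inv_div_two (z : ℂ) :
    Complex.cos z = (Complex.exp (z * Complex.I) + (Complex.exp (z * Complex.I))⁻¹) / 2 := by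
  rw [Complex.cos, ← Complex.exp_neg, neg_mul]

theorem discriminant_eq_16_det_gram_general
    (θ₁ θ₂ θ₃ θ₄ θ₅ θ₆ : ℝ)
    (a₁ a₂ a₃ a₄ a₅ a₆ : ℂ)
    (ha₁ : a₁ = Complex.exp (θ₁ * Complex.I)) (ha₂ : a₂ = Complex.exp (θ₂ * Complex.I))
    (ha₃ : a₃ = Complex.exp (θ₃ * Complex.I)) (ha₄ : a₄ = Complex.exp (θ₄ * Complex.I))
    (ha₅ : a₅ = Complex.exp (θ₅ * Complex.I)) (ha₆ : a₆ = Complex.exp (θ₆ * Complex.I))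
    (q₀ q₁ q₂ : ℂ)
    (hq₀ : q₀ = a₁*a₄ + a₂*a₅ + a₃*a₆ + a₁*a₂*a₆ + a₁*a₃*a₅ + a₂*a₃*a₄ + a₄*a₅*a₆
      + a₁*a₂*a₃*a₄*a₅*a₆)
    (hq₁ : q₁ = -(a₁ - a₁⁻¹)*(a₄ - a₄⁻¹) - (a₂ - a₂⁻¹)*(a₅ - a₅⁻¹) - (a₃ - a₃⁻¹)*(a₆ - a₆⁻¹))
    (hq₂ : q₂ = a₁⁻¹*a₄⁻¹ + a₂⁻¹*a₅⁻¹ + a₃⁻¹*a₆⁻¹ + a₁⁻¹*a₂⁻¹*a₆⁻¹ + a₁⁻¹*a₃⁻¹*a₅⁻¹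
      + a₂⁻¹*a₃⁻¹*a₄⁻¹ + a₄⁻¹*a₅⁻¹*a₆⁻¹ + a₁⁻¹*a₂⁻¹*a₃⁻¹*a₄⁻¹*a₅⁻¹*a₆⁻¹)
    (G : Matrix (Fin 4) (Fin 4) ℝ)
    (hG : G = !![1, -Real.cos θ₁, -Real.cos θ₂, -Real.cos θ₆;
                 -Real.cos θ₁, 1, -Real.cos θ₃, -Real.cos θ₅;
                 -Real.cos θ₂, -Real.cos θ₃, 1, -Real.cos θ₄;
                 -Real.cos θ₆, -Real.cos θ₅, -Real.cos θ₄, 1]) :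
    q₁ ^ 2 - 4 * q₀ * q₂ = 16 * (G.det : ℂ) := by
  subst hq₀ hq₁ hq₂ hG ha₁ ha₂ ha₃ ha₄ ha₅ ha₆
  rw [discriminant_eq_det_two_sub_sum_inv (Complex.exp_ne_zero _) (Complex.exp_ne_zero _)
    (Complex.exp_ne_zero _) (Complex.exp_ne_zero _) (Complex.exp_ne_zero _)
    (Complex.exp_ne_zero _), Matrix.det_symm_fin_four_of_const_diag,
    Matrix.det_symm_fin_four_of_const_diag]
  push_cast
  simp only [Complex.cos_eq_exp_add_inv_div_two]
  ring

theorem discriminant_eq_16_det_gram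
    (θ₁ θ₂ θ₃ θ₄ θ₅ θ₆ : ℝ)
    (h₁ : θ₁ ∈ Set.Ioo 0 π) (h₂ : θ₂ ∈ Set.Ioo 0 π) (h₃ : θ₃ ∈ Set.Ioo 0 π)
    (h₄ : θ₄ ∈ Set.Ioo 0 π) (h₅ : θ₅ ∈ Set.Ioo 0 π) (h₆ : θ₆ ∈ Set.Ioo 0 π)
    (a₁ a₂ a₃ a₄ a₅ a₆ : ℂ)
    (ha₁ : a₁ = Complex.exp (θ₁ * Complex.I)) (ha₂ : a₂ = Complex.exp (θ₂ * Complex.I))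
    (ha₃ : a₃ = Complex.exp (θ₃ * Complex.I)) (ha₄ : a₄ = Complex.exp (θ₄ * Complex.I))
    (ha₅ : a₅ = Complex.exp (θ₅ * Complex.I)) (ha₆ : a₆ = Complex.exp (θ₆ * Complex.I))
    (q₀ q₁ q₂ : ℂ)
    (hq₀ : q₀ = a₁*a₄ + a₂*a₅ + a₃*a₆ + a₁*a₂*a₆ + a₁*a₃*a₅ + a₂*a₃*a₄ + a₄*a₅*a₆
      + a₁*a₂*a₃*a₄*a₅*a₆)
    (hq₁ : q₁ = -(a₁ - a₁⁻¹)*(a₄ - a₄⁻¹) - (a₂ - a₂⁻¹)*(a₅ - a₅⁻¹) - (a₃ - a₃⁻¹)*(a₆ - a₆⁻¹))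
    (hq₂ : q₂ = a₁⁻¹*a₄⁻¹ + a₂⁻¹*a₅⁻¹ + a₃⁻¹*a₆⁻¹ + a₁⁻¹*a₂⁻¹*a₆⁻¹ + a₁⁻¹*a₃⁻¹*a₅⁻¹
      + a₂⁻¹*a₃⁻¹*a₄⁻¹ + a₄⁻¹*a₅⁻¹*a₆⁻¹ + a₁⁻¹*a₂⁻¹*a₃⁻¹*a₄⁻¹*a₅⁻¹*a₆⁻¹)
    (G : Matrix (Fin 4) (Fin 4) ℝ)
    (hG : G = !![1, -Real.cos θ₁, -Real.cos θ₂, -Real.cos θ₆;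
                 -Real.cos θ₁, 1, -Real.cos θ₃, -Real.cos θ₅;
                 -Real.cos θ₂, -Real.cos θ₃, 1, -Real.cos θ₄;
                 -Real.cos θ₆, -Real.cos θ₅, -Real.cos θ₄, 1]) :
    q₁ ^ 2 - 4 * q₀ * q₂ = 16 * (G.det : ℂ) :=
  discriminant_eq_16_det_gram_general θ₁ θ₂ θ₃ θ₄ θ₅ θ₆ a₁ a₂ a₃ a₄ a₅ a₆ ha₁ ha₂ ha₃ ha₄ ha₅ ha₆ q₀
    q₁ q₂ hq₀ hq₁ hq₂ G hG
end

section
/- Assume θ₁, θ₂, θ₃ ∈ (0, π) satisfy 0 < θ₁ + θ₂ - θ₃, θ₁ - θ₂ + θ₃, -θ₁ + θ₂ + θ₃ < π and π < θ₁ + θ₂ + θ₃ < 3π, and let a_j = e^{iθ_j}. Define Δ₀(a₁,a₂,a₃) = -(1/4)(Li₂(-a₁a₂⁻¹a₃⁻¹) + Li₂(-a₁⁻¹a₂a₃⁻¹) + Li₂(-a₁⁻¹a₂⁻¹a₃) + Li₂(-a₁a₂a₃)). Then the imaginary part of a₁ · ∂Δ₀/∂a₁ = (1/4)(log(1 + a₁a₂⁻¹a₃⁻¹)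 - log(1 + a₂a₁⁻¹a₃⁻¹) - log(1 + a₃a₁⁻¹a₂⁻¹) + log(1 + a₁a₂a₃)) equals θ₁/2 - π/4. -/
open scoped Real

lemma key_factor (φ : ℝ) :
    1 + Complex.exp (φ * Complex.I) =
      ((2 * Real.cos (φ / 2) : ℝ) : ℂ) * Complex.exp ((φ / 2 : ℝ) * Complex.I) := by
  have he : Complex.exp ((φ : ℂ) * Complex.I) =
      Complex.exp ((φ / 2 : ℝ) * Complex.I) * Complex.exp ((φ / 2 : ℝ) * Complex.I) := by
    rw [← Complex.exp_add]; push_cast; ring_nf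
  have hc : ((Real.cos (φ / 2) : ℝ) : ℂ) = Complex.cos ((φ / 2 : ℝ) : ℂ) := by
    exact_mod_cast Complex.ofReal_cos (φ / 2)
  rw [he]
  push_cast [hc]
  rw [Complex.cos]
  rw [show -((φ : ℂ) / 2) * Complex.I = -((φ : ℂ) / 2 * Complex.I) by ring,
    Complex.exp_neg]
  have hne : Complex.exp ((φ : ℂ) / 2 * Complex.I) ≠ 0 := Complex.exp_ne_zero _
  field_simp
  ring

lemma arg_r_exp (r ψ : ℝ) (hr : 0 < r) (hψ : ψ ∈ Set.Ioc (-π) π) :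
    Complex.arg ((r : ℂ) * Complex.exp ((ψ : ℝ) * Complex.I)) = ψ := by
  rw [Complex.arg_real_mul _ hr]
  rw [show ((ψ : ℝ) : ℂ) * Complex.I = (ψ : ℂ) * Complex.I from rfl, Complex.exp_mul_I]
  exact Complex.arg_cos_add_sin_mul_I hψ

lemma im_log_A (φ : ℝ) (h : φ ∈ Set.Ioo (-π) π) :
    (Complex.log (1 + Complex.exp (φ * Complex.I))).im = φ / 2 := by
  rw [Complex.log_im, key_factor]
  have hc : 0 < 2 * Real.cos (φ / 2) := by
    have : 0 < Real.cos (φ / 2) :=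
      Real.cos_pos_of_mem_Ioo ⟨by linarith [h.1], by linarith [h.2]⟩
    linarith
  exact arg_r_exp _ _ hc ⟨by linarith [h.1, Real.pi_pos], by linarith [h.2, Real.pi_pos]⟩

lemma im_log_B (φ : ℝ) (h : φ ∈ Set.Ioo π (3 * π)) :
    (Complex.log (1 + Complex.exp (φ * Complex.I))).im = φ / 2 - π := by
  rw [Complex.log_im, key_factor]
  have hfac : ((2 * Real.cos (φ / 2) : ℝ) : ℂ) * Complex.exp ((φ / 2 : ℝ) * Complex.I)
      = ((-(2 * Real.cos (φ / 2)) : ℝ) : ℂ) * Complex.exp ((φ / 2 - π : ℝ) * Complex.I) := by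
    have : Complex.exp ((φ / 2 - π : ℝ) * Complex.I)
        = Complex.exp ((φ / 2 : ℝ) * Complex.I) * Complex.exp (-(π : ℂ) * Complex.I) := by
      rw [← Complex.exp_add]; push_cast; ring_nf
    rw [this]
    rw [show -(π : ℂ) * Complex.I = -((π : ℂ) * Complex.I) by ring, Complex.exp_neg,
      Complex.exp_pi_mul_I]
    push_cast; ring
  rw [hfac]
  have hc : 0 < -(2 * Real.cos (φ / 2)) := by
    have : Real.cos (φ / 2) < 0 := by
      apply Real.cos_neg_of_pi_div_two_lt_of_lt <;> linarith [h.1, h.2, Real.pi_pos]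
    linarith
  exact arg_r_exp _ _ hc ⟨by linarith [h.1, Real.pi_pos], by linarith [h.2, Real.pi_pos]⟩

theorem im_a1_deriv_Delta0
    (θ₁ θ₂ θ₃ : ℝ)
    (h₁ : θ₁ ∈ Set.Ioo 0 π) (h₂ : θ₂ ∈ Set.Ioo 0 π) (h₃ : θ₃ ∈ Set.Ioo 0 π)
    (hA : 0 < θ₁ + θ₂ - θ₃ ∧ θ₁ + θ₂ - θ₃ < π)
    (hB : 0 < θ₁ - θ₂ + θ₃ ∧ θ₁ - θ₂ + θ₃ < π)
    (hC : 0 < -θ₁ + θ₂ + θ₃ ∧ -θ₁ + θ₂ + θ₃ < π)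
    (hD : π < θ₁ + θ₂ + θ₃ ∧ θ₁ + θ₂ + θ₃ < 3 * π)
    (a₁ a₂ a₃ : ℂ)
    (ha₁ : a₁ = Complex.exp (θ₁ * Complex.I)) (ha₂ : a₂ = Complex.exp (θ₂ * Complex.I))
    (ha₃ : a₃ = Complex.exp (θ₃ * Complex.I)) :
    ((1 / 4 : ℂ) * (Complex.log (1 + a₁*a₂⁻¹*a₃⁻¹) - Complex.log (1 + a₂*a₁⁻¹*a₃⁻¹)
        - Complex.log (1 + a₃*a₁⁻¹*a₂⁻¹) + Complex.log (1 + a₁*a₂*a₃))).im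
      = θ₁ / 2 - π / 4 := by
  have hinv : ∀ θ : ℝ, (Complex.exp ((θ : ℂ) * Complex.I))⁻¹
      = Complex.exp ((-θ : ℝ) * Complex.I) := by
    intro θ; rw [← Complex.exp_neg]; push_cast; ring_nf
  have e1 : a₁*a₂⁻¹*a₃⁻¹ = Complex.exp ((θ₁ - θ₂ - θ₃ : ℝ) * Complex.I) := by
    rw [ha₁, ha₂, ha₃, hinv, hinv, ← Complex.exp_add, ← Complex.exp_add]; push_cast; ring_nf
  have e2 : a₂*a₁⁻¹*a₃⁻¹ = Complex.exp ((θ₂ - θ₁ - θ₃ : ℝ) * Complex.I) := by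
    rw [ha₁, ha₂, ha₃, hinv, hinv, ← Complex.exp_add, ← Complex.exp_add]; push_cast; ring_nf
  have e3 : a₃*a₁⁻¹*a₂⁻¹ = Complex.exp ((θ₃ - θ₁ - θ₂ : ℝ) * Complex.I) := by
    rw [ha₁, ha₂, ha₃, hinv, hinv, ← Complex.exp_add, ← Complex.exp_add]; push_cast; ring_nf
  have e4 : a₁*a₂*a₃ = Complex.exp ((θ₁ + θ₂ + θ₃ : ℝ) * Complex.I) := by
    rw [ha₁, ha₂, ha₃, ← Complex.exp_add, ← Complex.exp_add]; push_cast; ring_nf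
  rw [e1, e2, e3, e4]
  have i1 := im_log_A (θ₁ - θ₂ - θ₃) ⟨by linarith [hC.1], by linarith [hB.2]⟩
  have i2 := im_log_A (θ₂ - θ₁ - θ₃) ⟨by linarith [hB.1], by linarith [hC.2]⟩
  have i3 := im_log_A (θ₃ - θ₁ - θ₂) ⟨by linarith [hA.1], by linarith [hC.2, hB.2, hA.2]⟩
  have i4 := im_log_B (θ₁ + θ₂ + θ₃) ⟨hD.1, hD.2⟩
  simp only [Complex.mul_im, Complex.add_im, Complex.sub_im, Complex.add_re, Complex.sub_re,
    Complex.one_re, Complex.one_im, i1, i2, i3, i4]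
  norm_num
  linarith
end

section
/- Assume θ₁,...,θ₆ ∈ (0,π) are the dihedral angles of a spherical tetrahedron, so that at each of the four vertices the three incident angles satisfy the admissibility conditions (each sum of two minus the third lies in (0,π) and the total sum lies in (π, 3π)). Let a_j = e^{iθ_j} and define Δ(a₁,...,a₆) = Δ₀(a₁,a₂,a₃) + Δ₀(a₁,a₅,a₆) + Δ₀(a₂,a₄,a₆) + Δ₀(a₃,a₄,a₅) - (1/2)Σⱼ₌₁⁶ (log a_j)², where Δ₀(x,y,z) = -(1/4)(Li₂(-xy⁻¹z⁻¹) + Li₂(-x⁻¹yz⁻¹) + Li₂(-x⁻¹y⁻¹z) + Li₂(-xyz)). Then Re(Δ(a₁,...,a₆)) = -2π²/3 + (π/2) Σⱼ₌₁⁶ θ_j. -/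
open scoped Real

/-- The dilogarithm function, given on the closed unit disk by its power series
(the principal branch). -/
noncomputable def Li2 (z : ℂ) : ℂ := ∑' n : ℕ, z ^ (n + 1) / ((n : ℂ) + 1) ^ 2

/-- `Δ₀(x,y,z)` of Murakami's paper. -/
noncomputable def Delta0 (x y z : ℂ) : ℂ :=
  -(1 / 4) * (Li2 (-(x*y⁻¹*z⁻¹)) + Li2 (-(x⁻¹*y*z⁻¹)) + Li2 (-(x⁻¹*y⁻¹*z)) + Li2 (-(x*y*z)))

/-- `Δ(a₁,…,a₆)` of Murakami's paper. -/
noncomputable def Delta (a₁ a₂ a₃ a₄ a₅ a₆ : ℂ) : ℂ :=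
  Delta0 a₁ a₂ a₃ + Delta0 a₁ a₅ a₆ + Delta0 a₂ a₄ a₆ + Delta0 a₃ a₄ a₅
    - (1 / 2) * (Complex.log a₁ ^ 2 + Complex.log a₂ ^ 2 + Complex.log a₃ ^ 2
      + Complex.log a₄ ^ 2 + Complex.log a₅ ^ 2 + Complex.log a₆ ^ 2)

/-- The admissibility condition for the three dihedral angles at edges meeting
at a vertex of a spherical tetrahedron. -/
def Admissible (x y z : ℝ) : Prop :=
  (0 < x + y - z ∧ x + y - z < π) ∧ (0 < x - y + z ∧ x - y + z < π)
    ∧ (0 < -x + y + z ∧ -x + y + z < π) ∧ (π < x + y + z ∧ x + y + z < 3 * π)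

/-!
On the unit circle the real part of the dilogarithm is a Fourier series of the Bernoulli
polynomial `B₂`, so `Re Li₂(e^{iθ}) = θ²/4 - πθ/2 + π²/6` is a quadratic polynomial in `θ` on
`[0, 2π]`. The admissibility conditions at a vertex put the arguments of the four dilogarithms in
`Δ₀` at the angles `π + x - y - z`, `π - x + y - z`, `π - x - y + z` and `x + y + z - π`, all in
`[0, 2π]`; hence `Re Δ₀` is an explicit quadratic, and the squares `θⱼ²` cancel against
`-(1/2) Σ (log aⱼ)² = (1/2) Σ θⱼ²`.
-/

open Complex

theorem hasSum_cos_mul_div_sq {θ : ℝ} (hθ : θ ∈ Set.Icc 0 (2 * π)) :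
    HasSum (fun n : ℕ => Real.cos ((n + 1) * θ) / ((n : ℝ) + 1) ^ 2)
      (θ ^ 2 / 4 - π * θ / 2 + π ^ 2 / 6) := by
  have hx : θ / (2 * π) ∈ Set.Icc (0 : ℝ) 1 := by
    constructor
    · exact div_nonneg hθ.1 (by positivity)
    · rw [div_le_one (by positivity)]; exact hθ.2
  have h := (hasSum_nat_add_iff' 1).mpr (hasSum_one_div_nat_pow_mul_cos one_ne_zero hx)
  rw [show 2 * 1 = 2 from rfl, ← bernoulliFun, bernoulliFun_two] at h
  have hterm : ∀ n : ℕ, Real.cos ((n + 1) * θ) / ((n : ℝ) + 1) ^ 2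
      = 1 / ((n + 1 : ℕ) : ℝ) ^ 2 * Real.cos (2 * π * (n + 1 : ℕ) * (θ / (2 * π))) := by
    intro n
    push_cast
    rw [show 2 * π * (n + 1) * (θ / (2 * π)) = (n + 1) * θ by field_simp]
    ring
  have hvalue : θ ^ 2 / 4 - π * θ / 2 + π ^ 2 / 6
      = (-1) ^ (1 + 1) * (2 * π) ^ 2 / 2 / (Nat.factorial 2 : ℝ)
          * ((θ / (2 * π)) ^ 2 - θ / (2 * π) + 6⁻¹)
        - ∑ i ∈ Finset.range 1, 1 / (i : ℝ) ^ 2 * Real.cos (2 * π * i * (θ / (2 * π))) := by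
    norm_num
    field_simp
    ring
  simpa only [hterm, hvalue] using h

theorem summable_Li2_series {z : ℂ} (hz : ‖z‖ ≤ 1) :
    Summable fun n : ℕ => z ^ (n + 1) / ((n : ℂ) + 1) ^ 2 := by
  refine .of_norm_bounded (g := fun n : ℕ => 1 / ((n : ℝ) + 1) ^ 2) ?_ fun n => ?_
  · exact_mod_cast (summable_nat_add_iff 1).mpr (Real.summable_one_div_nat_pow.mpr one_lt_two)
  · rw [norm_div, norm_pow, norm_pow]
    norm_cast
    gcongr
    exact pow_le_one₀ (norm_nonneg z) hz

theorem re_Li2_exp_ofReal_mul_I {θ : ℝ} (hθ : θ ∈ Set.Icc 0 (2 * π)) :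
    (Li2 (exp (θ * I))).re = θ ^ 2 / 4 - π * θ / 2 + π ^ 2 / 6 := by
  rw [Li2, re_tsum (summable_Li2_series (norm_exp_ofReal_mul_I θ).le)]
  refine Eq.trans (tsum_congr fun n => ?_) (hasSum_cos_mul_div_sq hθ).tsum_eq
  rw [← exp_nat_mul,
    show ((n + 1 : ℕ) : ℂ) * (θ * I) = ((n + 1 : ℝ) * θ : ℝ) * I by push_cast; ring,
    show ((n : ℂ) + 1) ^ 2 = (((n : ℝ) + 1) ^ 2 : ℝ) by push_cast; ring, div_ofReal_re,
    exp_ofReal_mul_I_re]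

theorem exp_ofReal_mul_I_inv (x : ℝ) : (exp (x * I))⁻¹ = exp ((-x : ℝ) * I) := by
  rw [← exp_neg]; push_cast; ring_nf

theorem exp_ofReal_mul_I_mul (x y : ℝ) :
    exp (x * I) * exp (y * I) = exp ((x + y : ℝ) * I) := by
  rw [← exp_add]; push_cast; ring_nf

theorem neg_exp_ofReal_mul_I_eq_add_pi (t : ℝ) : -exp (t * I) = exp ((t + π : ℝ) * I) := by
  push_cast; exact (exp_mul_I_antiperiodic (t : ℂ)).symm

theorem neg_exp_ofReal_mul_I_eq_sub_pi (t : ℝ) : -exp (t * I) = exp ((t - π : ℝ) * I) := by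
  push_cast; exact (exp_mul_I_antiperiodic.sub_eq (t : ℂ)).symm

theorem re_Delta0_exp_ofReal_mul_I {x y z : ℝ} (h : Admissible x y z) :
    (Delta0 (exp (x * I)) (exp (y * I)) (exp (z * I))).re
      = -(x ^ 2 + y ^ 2 + z ^ 2) / 4 + π * (x + y + z) / 4 - π ^ 2 / 6 := by
  obtain ⟨⟨hxy, hxy'⟩, ⟨hxz, hxz'⟩, ⟨hyz, hyz'⟩, ⟨hsum, hsum'⟩⟩ := h
  simp only [Delta0, exp_ofReal_mul_I_inv, exp_ofReal_mul_I_mul,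
    neg_exp_ofReal_mul_I_eq_add_pi (x + -y + -z), neg_exp_ofReal_mul_I_eq_add_pi (-x + y + -z),
    neg_exp_ofReal_mul_I_eq_add_pi (-x + -y + z), neg_exp_ofReal_mul_I_eq_sub_pi (x + y + z)]
  rw [show (-(1 / 4) : ℂ) = ((-(1 / 4) : ℝ) : ℂ) by push_cast; ring, re_ofReal_mul,
    add_re, add_re, add_re,
    re_Li2_exp_ofReal_mul_I ⟨by linarith, by linarith⟩,
    re_Li2_exp_ofReal_mul_I ⟨by linarith, by linarith⟩,
    re_Li2_exp_ofReal_mul_I ⟨by linarith, by linarith⟩,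
    re_Li2_exp_ofReal_mul_I ⟨by linarith, by linarith⟩]
  ring

theorem log_exp_ofReal_mul_I_sq {θ : ℝ} (hθ : θ ∈ Set.Ioc (-π) π) :
    log (exp (θ * I)) ^ 2 = ((-θ ^ 2 : ℝ) : ℂ) := by
  rw [log_exp (by simpa using hθ.1) (by simpa using hθ.2), mul_pow, I_sq]
  push_cast; ring

theorem re_Delta
    (θ₁ θ₂ θ₃ θ₄ θ₅ θ₆ : ℝ)
    (h₁ : θ₁ ∈ Set.Ioo 0 π) (h₂ : θ₂ ∈ Set.Ioo 0 π) (h₃ : θ₃ ∈ Set.Ioo 0 π)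
    (h₄ : θ₄ ∈ Set.Ioo 0 π) (h₅ : θ₅ ∈ Set.Ioo 0 π) (h₆ : θ₆ ∈ Set.Ioo 0 π)
    (hv₁ : Admissible θ₁ θ₂ θ₃) (hv₂ : Admissible θ₁ θ₅ θ₆)
    (hv₃ : Admissible θ₂ θ₄ θ₆) (hv₄ : Admissible θ₃ θ₄ θ₅)
    (a₁ a₂ a₃ a₄ a₅ a₆ : ℂ)
    (ha₁ : a₁ = Complex.exp (θ₁ * Complex.I)) (ha₂ : a₂ = Complex.exp (θ₂ * Complex.I))
    (ha₃ : a₃ = Complex.exp (θ₃ * Complex.I)) (ha₄ : a₄ = Complex.exp (θ₄ * Complex.I))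
    (ha₅ : a₅ = Complex.exp (θ₅ * Complex.I)) (ha₆ : a₆ = Complex.exp (θ₆ * Complex.I)) :
    (Delta a₁ a₂ a₃ a₄ a₅ a₆).re
      = -2 * π ^ 2 / 3 + (π / 2) * (θ₁ + θ₂ + θ₃ + θ₄ + θ₅ + θ₆) := by
  subst ha₁ ha₂ ha₃ ha₄ ha₅ ha₆
  have hlog {θ : ℝ} (hθ : θ ∈ Set.Ioo 0 π) :=
    log_exp_ofReal_mul_I_sq ⟨by linarith [hθ.1, Real.pi_pos], hθ.2.le⟩
  rw [Delta, sub_re, add_re, add_re, add_re,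
    re_Delta0_exp_ofReal_mul_I hv₁, re_Delta0_exp_ofReal_mul_I hv₂,
    re_Delta0_exp_ofReal_mul_I hv₃, re_Delta0_exp_ofReal_mul_I hv₄,
    hlog h₁, hlog h₂, hlog h₃, hlog h₄, hlog h₅, hlog h₆]
  simp only [← ofReal_add, show (1 / 2 : ℂ) = ((1 / 2 : ℝ) : ℂ) by push_cast; ring, ← ofReal_mul,
    ofReal_re]
  ring
end
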